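/- Let D ≥ 2, n = 2D or n = 2D+1, ζ = exp(2πi/n), and let Γ be the cycle graph on ZMod n with graph distance ∂ and E_0,…,E_D its primitive idempotent matrices. For h,i,j ∈ {0,…,D}, let P_{h,i,j} be the indicator function of {(x,y,z) : ∂(y,z)=h, ∂(x,z)=i, ∂(x,y)=j}, let Q_{h,i,j}(u,v,w) = n · Σ_x (E_h)_{u x} (E_i)_{v x} (E_j)_{w x}, and let Fix(Aut) be the space of Aut(Γ)-invariant functions on (ZMod n)³. Then for all h,i,j ∈ {0,…,D}: (i) the image of Fix(Aut) under the operator f ↦ ((x,y,z) ↦ P_{h,i,j}(x,y,z) · f(x,y,z)) equals the ℂ-span of {P_{h,i,j}}; (ii) the image of Fix(Aut) under the operator f ↦ E_h^{(1)} E_i^{(2)} E_j^{(3)} f equals the ℂ-span of {Q_{h,i,j}}. In particular, the image in (i) is zero iff there is no triple with distance profile (h,i,j), and the image in (ii) is zero iff Q_{h,i,j} = 0. -/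

import Mathlib

/-- Adjacency in the cycle graph on `ZMod n`. -/
def cycAdj (n : ℕ) (x y : ZMod n) : Prop := x - y = 1 ∨ y - x = 1

/-- Graph distance in the cycle graph on `ZMod n`. -/
def cycDist (n : ℕ) (x y : ZMod n) : ℕ := min (x - y).val (n - (x - y).val)

/-- The automorphism group of the cycle graph on `ZMod n`. -/
def cycAut (n : ℕ) : Subgroup (Equiv.Perm (ZMod n)) where
  carrier := {g | ∀ x y, cycAdj n (g x) (g y) ↔ cycAdj n x y}
  one_mem' := by intro x y; simp
  mul_mem' := by
    intro a b ha hb x y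
    simp only [Equiv.Perm.mul_apply]
    exact (ha (b x) (b y)).trans (hb x y)
  inv_mem' := by
    intro a ha x y
    have h := ha (a⁻¹ x) (a⁻¹ y)
    simpa [Equiv.Perm.inv_def] using h.symm

/-- The subspace `Fix(Aut)` of `Aut(Γ)`-invariant complex functions on triples. -/
noncomputable def fixSubmodule (n : ℕ) : Submodule ℂ ((ZMod n × ZMod n × ZMod n) → ℂ) where
  carrier := {f | ∀ g ∈ cycAut n, ∀ x y z : ZMod n, f (g x, g y, g z) = f (x, y, z)}
  add_mem' := by intro f h hf hh g hg x y z; simp [hf g hg x y z, hh g hg x y z]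
  zero_mem' := by intro g hg x y z; rfl
  smul_mem' := by intro c f hf g hg x y z; simp [hf g hg x y z]

/-- The indicator function `P_{h,i,j}` of the set of triples with distance profile
`(h,i,j)`. -/
noncomputable def Pfun (n : ℕ) (h i j : ℕ) : ZMod n × ZMod n × ZMod n → ℂ := fun t =>
  if cycDist n t.2.1 t.2.2 = h ∧ cycDist n t.1 t.2.2 = i ∧ cycDist n t.1 t.2.1 = j
  then 1 else 0

/-- The primitive idempotent matrices `E_0, …, E_D` of the cycle on `ZMod n`. -/
noncomputable def Emat (D n : ℕ) (ζ : ℂ) (j : ℕ) : Matrix (ZMod n) (ZMod n) ℂ :=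
  Matrix.of fun x y =>
    if j = 0 then 1 / n
    else if n = 2 * D ∧ j = D then ζ ^ ((x - y).val * D) / n
    else (ζ ^ ((x - y).val * j) + ζ ^ (-(((x - y).val * j : ℕ) : ℤ))) / n

/-- The function `Q_{h,i,j}(u,v,w) = n · Σ_x (E_h)_{ux} (E_i)_{vx} (E_j)_{wx}`. -/
noncomputable def Qfun (D n : ℕ) [NeZero n] (ζ : ℂ) (h i j : ℕ) :
    ZMod n × ZMod n × ZMod n → ℂ := fun t =>
  n * ∑ x : ZMod n, Emat D n ζ h t.1 x * Emat D n ζ i t.2.1 x * Emat D n ζ j t.2.2 x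

/-- A matrix `M` acting on functions on triples in the first coordinate. -/
noncomputable def Mop1 (n : ℕ) [NeZero n] (M : Matrix (ZMod n) (ZMod n) ℂ)
    (f : ZMod n × ZMod n × ZMod n → ℂ) : ZMod n × ZMod n × ZMod n → ℂ := fun t =>
  ∑ x : ZMod n, M t.1 x * f (x, t.2.1, t.2.2)

/-- A matrix `M` acting on functions on triples in the second coordinate. -/
noncomputable def Mop2 (n : ℕ) [NeZero n] (M : Matrix (ZMod n) (ZMod n) ℂ)
    (f : ZMod n × ZMod n × ZMod n → ℂ) : ZMod n × ZMod n × ZMod n → ℂ := fun t =>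
  ∑ x : ZMod n, M t.2.1 x * f (t.1, x, t.2.2)

/-- A matrix `M` acting on functions on triples in the third coordinate. -/
noncomputable def Mop3 (n : ℕ) [NeZero n] (M : Matrix (ZMod n) (ZMod n) ℂ)
    (f : ZMod n × ZMod n × ZMod n → ℂ) : ZMod n × ZMod n × ZMod n → ℂ := fun t =>
  ∑ x : ZMod n, M t.2.2 x * f (t.1, t.2.1, x)

/-!
Write `ψ x = ζ ^ x.val`, a primitive additive character of `ZMod n`. Then
`E_k x y = n⁻¹ ∑_{s ∈ S_k} ψ (s (x - y))` with `S_k ⊆ {k, -k}`, so `E_h^{(1)} E_i^{(2)} E_j^{(3)}`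
acts on `f` through its Fourier coefficients `f̂ (a, b, c)` with `(a, b, c) ∈ S_h × S_i × S_j`.
Translations and `x ↦ -x` are automorphisms of the cycle. For `f ∈ Fix(Aut)`, translation
invariance kills `f̂ (a, b, c)` unless `a + b + c = 0`, and reflection gives
`f̂ (-a, -b, -c) = f̂ (a, b, c)`. Two zero-sum triples whose entries agree up to sign agree up to a
global sign, so on `S_h × S_i × S_j` the coefficients of `f` are a multiple of those of the
indicator `Δ` of the diagonal, and `Q_{h,i,j}` is `n` times the image of `Δ ∈ Fix(Aut)`.
The same sign argument, applied to the differences `y - z`, `z - x`, `x - y`, shows that an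
invariant function is constant on each distance profile, which gives the claim about `P_{h,i,j}`.
-/

open Finset

theorem eq_or_eq_neg_of_add_add_eq_zero {G : Type*} [AddCommGroup G] {a b c a' b' c' : G}
    (ha : a' = a ∨ a' = -a) (hb : b' = b ∨ b' = -b) (hc : c' = c ∨ c' = -c)
    (h : a + b + c = 0) (h' : a' + b' + c' = 0) :
    a' = a ∧ b' = b ∧ c' = c ∨ a' = -a ∧ b' = -b ∧ c' = -c := by
  rcases ha with rfl | rfl <;> rcases hb with rfl | rfl <;> rcases hc with rfl | rfl <;>
    simp only [true_and, and_true, or_true, true_or]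
  -- each remaining case differs from `(a, b, c)` or `(-a, -b, -c)` in one entry `x`,
  -- and subtracting or adding `h` and `h'` gives `x + x = 0`
  all_goals first
    | (left; linear_combination (norm := module) h' - h)
    | (right; linear_combination (norm := module) h + h')

section TripleOperators

variable {n : ℕ}

def tripleDiag : ZMod n × ZMod n × ZMod n → ℂ := fun t =>
  if t.2.1 = t.1 ∧ t.2.2 = t.1 then 1 else 0

variable [NeZero n]

lemma Mop_comp_apply (M N P : Matrix (ZMod n) (ZMod n) ℂ) (f : ZMod n × ZMod n × ZMod n → ℂ)
    (u v w : ZMod n) :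
    Mop1 n M (Mop2 n N (Mop3 n P f)) (u, v, w) =
      ∑ t, M u t.1 * N v t.2.1 * P w t.2.2 * f t := by
  simp only [Mop1, Mop2, Mop3, Finset.mul_sum, Fintype.sum_prod_type]
  exact sum_congr rfl fun x _ => sum_congr rfl fun y _ => sum_congr rfl fun z _ => by ring

lemma Mop_comp_smul (M N P : Matrix (ZMod n) (ZMod n) ℂ) (c : ℂ)
    (f : ZMod n × ZMod n × ZMod n → ℂ) :
    Mop1 n M (Mop2 n N (Mop3 n P (c • f))) = c • Mop1 n M (Mop2 n N (Mop3 n P f)) := by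
  funext ⟨u, v, w⟩
  simp only [Mop_comp_apply, Pi.smul_apply, smul_eq_mul, Finset.mul_sum]
  exact sum_congr rfl fun t _ => by ring

lemma Mop_comp_tripleDiag_apply (M N P : Matrix (ZMod n) (ZMod n) ℂ) (u v w : ZMod n) :
    Mop1 n M (Mop2 n N (Mop3 n P tripleDiag)) (u, v, w) = ∑ x, M u x * N v x * P w x := by
  simp [Mop_comp_apply, tripleDiag, Fintype.sum_prod_type, ite_and]

end TripleOperators

section Fourier

variable {n : ℕ} (ψ : AddChar (ZMod n) ℂ)

noncomputable def freqMat (S : Finset (ZMod n)) : Matrix (ZMod n) (ZMod n) ℂ :=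
  Matrix.of fun x y => (∑ s ∈ S, ψ (s * (x - y))) / n

lemma freqMat_mul_freqMat_mul_freqMat (S₁ S₂ S₃ : Finset (ZMod n)) (u v w x y z : ZMod n) :
    freqMat ψ S₁ u x * freqMat ψ S₂ v y * freqMat ψ S₃ w z =
      (∑ a ∈ S₁, ∑ b ∈ S₂, ∑ c ∈ S₃,
        ψ (a * u + b * v + c * w) * ψ (-(a * x + b * y + c * z))) / n ^ 3 := by
  simp only [freqMat, Matrix.of_apply, div_mul_div_comm, ← pow_three']
  rw [sum_mul_sum]
  simp_rw [sum_mul, mul_sum, ← AddChar.map_add_eq_mul]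
  congr! 5 with a _ b _ c _
  ring

variable [NeZero n]

noncomputable def tripleFourier (f : ZMod n × ZMod n × ZMod n → ℂ) (a b c : ZMod n) : ℂ :=
  ∑ t, ψ (-(a * t.1 + b * t.2.1 + c * t.2.2)) * f t

lemma Mop_comp_freqMat_apply (S₁ S₂ S₃ : Finset (ZMod n)) (f : ZMod n × ZMod n × ZMod n → ℂ)
    (u v w : ZMod n) :
    Mop1 n (freqMat ψ S₁) (Mop2 n (freqMat ψ S₂) (Mop3 n (freqMat ψ S₃) f)) (u, v, w) =
      (∑ a ∈ S₁, ∑ b ∈ S₂, ∑ c ∈ S₃, ψ (a * u + b * v + c * w) * tripleFourier ψ f a b c) /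
        n ^ 3 := by
  simp only [Mop_comp_apply, freqMat_mul_freqMat_mul_freqMat]
  simp only [tripleFourier, mul_sum, sum_mul, div_mul_eq_mul_div, ← sum_div, mul_assoc]
  congr 1
  rw [sum_comm]; refine sum_congr rfl fun a _ => ?_
  rw [sum_comm]; refine sum_congr rfl fun b _ => ?_
  rw [sum_comm]

lemma Mop_comp_freqMat_eq_smul {S₁ S₂ S₃ : Finset (ZMod n)}
    {f g : ZMod n × ZMod n × ZMod n → ℂ} {κ : ℂ} (h : ∀ a ∈ S₁, ∀ b ∈ S₂, ∀ c ∈ S₃,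
      tripleFourier ψ f a b c = κ * tripleFourier ψ g a b c) :
    Mop1 n (freqMat ψ S₁) (Mop2 n (freqMat ψ S₂) (Mop3 n (freqMat ψ S₃) f)) =
      κ • Mop1 n (freqMat ψ S₁) (Mop2 n (freqMat ψ S₂) (Mop3 n (freqMat ψ S₃) g)) := by
  funext ⟨u, v, w⟩
  simp only [Pi.smul_apply, smul_eq_mul, Mop_comp_freqMat_apply, mul_div_assoc', mul_sum]
  congr 1
  refine sum_congr rfl fun a ha => sum_congr rfl fun b hb => sum_congr rfl fun c hc => ?_
  rw [h a ha b hb c hc]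
  ring

variable {ψ}

lemma tripleFourier_eq_zero_of_add_ne_zero (hψ : ψ.IsPrimitive)
    {f : ZMod n × ZMod n × ZMod n → ℂ} (hf : ∀ r x y z, f (x + r, y + r, z + r) = f (x, y, z))
    {a b c : ZMod n} (habc : a + b + c ≠ 0) : tripleFourier ψ f a b c = 0 := by
  obtain ⟨r, hr⟩ := AddChar.ne_one_iff.mp (hψ habc)
  rw [AddChar.mulShift_apply] at hr
  have hshift : tripleFourier ψ f a b c = ψ ((a + b + c) * r) * tripleFourier ψ f a b c := by
    conv_lhs => rw [tripleFourier, ← Equiv.sum_comp (Equiv.subRight (r, r, r))]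
    rw [tripleFourier, mul_sum]
    refine sum_congr rfl fun ⟨x, y, z⟩ _ => ?_
    have hfxyz : f (x - r, y - r, z - r) = f (x, y, z) := by
      simpa only [sub_eq_add_neg] using hf (-r) x y z
    rw [Equiv.subRight_apply, Prod.mk_sub_mk, Prod.mk_sub_mk, hfxyz, ← mul_assoc,
      ← AddChar.map_add_eq_mul]
    congr 2
    ring
  exact (mul_left_eq_self₀.mp hshift.symm).resolve_left hr

lemma tripleFourier_neg {f : ZMod n × ZMod n × ZMod n → ℂ}
    (hf : ∀ x y z, f (-x, -y, -z) = f (x, y, z)) (a b c : ZMod n) :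
    tripleFourier ψ f (-a) (-b) (-c) = tripleFourier ψ f a b c := by
  rw [tripleFourier, ← Equiv.sum_comp (Equiv.neg _)]
  refine sum_congr rfl fun ⟨x, y, z⟩ _ => ?_
  rw [Equiv.neg_apply, Prod.neg_mk, Prod.neg_mk, hf]
  congr 2
  ring

lemma tripleFourier_tripleDiag (hψ : ψ.IsPrimitive) (a b c : ZMod n) :
    tripleFourier ψ tripleDiag a b c = if a + b + c = 0 then (n : ℂ) else 0 := by
  simp only [tripleFourier, tripleDiag, mul_ite, mul_one, mul_zero, Fintype.sum_prod_type, ite_and,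
    sum_ite_irrel, sum_const_zero, sum_ite_eq', mem_univ, if_true]
  convert AddChar.sum_mulShift (-(a + b + c)) hψ using 2 with x
  · ring_nf
  · simp only [neg_eq_zero, ZMod.card, Nat.cast_ite, Nat.cast_zero]

lemma exists_Mop_comp_freqMat_eq_smul_tripleDiag (hψ : ψ.IsPrimitive)
    {S₁ S₂ S₃ : Finset (ZMod n)} (hS₁ : ∀ s ∈ S₁, ∀ s' ∈ S₁, s' = s ∨ s' = -s)
    (hS₂ : ∀ s ∈ S₂, ∀ s' ∈ S₂, s' = s ∨ s' = -s) (hS₃ : ∀ s ∈ S₃, ∀ s' ∈ S₃, s' = s ∨ s' = -s)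
    {f : ZMod n × ZMod n × ZMod n → ℂ} (hf_add : ∀ r x y z, f (x + r, y + r, z + r) = f (x, y, z))
    (hf_neg : ∀ x y z, f (-x, -y, -z) = f (x, y, z)) :
    ∃ κ : ℂ, Mop1 n (freqMat ψ S₁) (Mop2 n (freqMat ψ S₂) (Mop3 n (freqMat ψ S₃) f)) =
      κ • Mop1 n (freqMat ψ S₁) (Mop2 n (freqMat ψ S₂) (Mop3 n (freqMat ψ S₃) tripleDiag)) := by
  suffices ∃ κ : ℂ, ∀ a ∈ S₁, ∀ b ∈ S₂, ∀ c ∈ S₃,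
      tripleFourier ψ f a b c = κ * tripleFourier ψ tripleDiag a b c by
    obtain ⟨κ, hκ⟩ := this
    exact ⟨κ, Mop_comp_freqMat_eq_smul ψ hκ⟩
  by_cases hex : ∃ a₀ ∈ S₁, ∃ b₀ ∈ S₂, ∃ c₀ ∈ S₃, a₀ + b₀ + c₀ = 0
  · obtain ⟨a₀, ha₀, b₀, hb₀, c₀, hc₀, h₀⟩ := hex
    have hn : (n : ℂ) ≠ 0 := NeZero.ne _
    refine ⟨tripleFourier ψ f a₀ b₀ c₀ / n, fun a ha b hb c hc => ?_⟩
    rw [tripleFourier_tripleDiag hψ]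
    split_ifs with habc
    · obtain ⟨rfl, rfl, rfl⟩ | ⟨rfl, rfl, rfl⟩ := eq_or_eq_neg_of_add_add_eq_zero
        (hS₁ _ ha₀ _ ha) (hS₂ _ hb₀ _ hb) (hS₃ _ hc₀ _ hc) h₀ habc
      · field_simp
      · rw [tripleFourier_neg hf_neg]
        field_simp
    · rw [mul_zero, tripleFourier_eq_zero_of_add_ne_zero hψ hf_add habc]
  · refine ⟨0, fun a ha b hb c hc => ?_⟩
    rw [zero_mul, tripleFourier_eq_zero_of_add_ne_zero hψ hf_add
      fun h => hex ⟨a, ha, b, hb, c, hc, h⟩]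

end Fourier

def cycFreqs (D n k : ℕ) : Finset (ZMod n) :=
  if n = 2 * D ∧ k = D then {(k : ZMod n)} else {(k : ZMod n), -(k : ZMod n)}

section Cycle

variable {n : ℕ}

lemma eq_or_eq_neg_of_mem_cycFreqs {D k : ℕ} {s s' : ZMod n} (hs : s ∈ cycFreqs D n k)
    (hs' : s' ∈ cycFreqs D n k) : s' = s ∨ s' = -s := by
  unfold cycFreqs at hs hs'
  split_ifs at hs hs' <;> simp only [mem_insert, mem_singleton] at hs hs' <;>
    rcases hs with rfl | rfl <;> rcases hs' with rfl | rfl <;> simp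

lemma natCast_ne_neg_natCast {D k : ℕ} (hn : n = 2 * D ∨ n = 2 * D + 1) (hk₀ : k ≠ 0)
    (hk : k ≤ D) (hkD : ¬(n = 2 * D ∧ k = D)) : (k : ZMod n) ≠ -(k : ZMod n) := by
  intro h
  have h2k : ((2 * k : ℕ) : ZMod n) = 0 := by push_cast; linear_combination h
  rw [ZMod.natCast_eq_zero_iff] at h2k
  have := Nat.le_of_dvd (by omega) h2k
  omega

lemma addRight_mem_cycAut (r : ZMod n) : Equiv.addRight r ∈ cycAut n := by
  intro x y
  simp only [cycAdj, Equiv.coe_addRight, add_sub_add_right_eq_sub]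

lemma neg_mem_cycAut : Equiv.neg (ZMod n) ∈ cycAut n := by
  intro x y
  simp only [cycAdj, Equiv.neg_apply, neg_sub_neg]
  exact or_comm

variable {f : ZMod n × ZMod n × ZMod n → ℂ}

lemma apply_add_of_mem_fixSubmodule (hf : f ∈ fixSubmodule n) (r x y z : ZMod n) :
    f (x + r, y + r, z + r) = f (x, y, z) :=
  hf _ (addRight_mem_cycAut r) x y z

lemma apply_neg_of_mem_fixSubmodule (hf : f ∈ fixSubmodule n) (x y z : ZMod n) :
    f (-x, -y, -z) = f (x, y, z) :=
  hf _ neg_mem_cycAut x y z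

lemma tripleDiag_mem_fixSubmodule : tripleDiag ∈ fixSubmodule n := by
  intro g _ x y z
  simp only [tripleDiag, EmbeddingLike.apply_eq_iff_eq]

lemma Pfun_eq_zero_iff (h i j : ℕ) :
    Pfun n h i j = 0 ↔ ¬∃ t : ZMod n × ZMod n × ZMod n,
      cycDist n t.2.1 t.2.2 = h ∧ cycDist n t.1 t.2.2 = i ∧ cycDist n t.1 t.2.1 = j := by
  simp only [funext_iff, Pfun, Pi.zero_apply, ite_eq_right_iff, one_ne_zero, imp_false,
    not_exists]

variable [NeZero n]

lemma Emat_eq_freqMat {D k : ℕ} (hn : n = 2 * D ∨ n = 2 * D + 1) {ζ : ℂ}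
    (hζ : IsPrimitiveRoot ζ n) (hk : k ≤ D) :
    Emat D n ζ k = freqMat (AddChar.zmodChar n hζ.pow_eq_one) (cycFreqs D n k) := by
  have hψk : ∀ a : ZMod n,
      AddChar.zmodChar n hζ.pow_eq_one ((k : ZMod n) * a) = ζ ^ (a.val * k) := by
    intro a
    rw [← nsmul_eq_mul, AddChar.map_nsmul_eq_pow, AddChar.zmodChar_apply, pow_mul]
  ext x y
  simp only [Emat, freqMat, Matrix.of_apply, cycFreqs]
  split_ifs with hk₀ hkD hkD
  · subst hk₀; simp
  · subst hk₀; simp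
  · rw [sum_singleton, ← hkD.2, hψk]
  · rw [sum_pair (natCast_ne_neg_natCast hn hk₀ hk hkD), neg_mul, AddChar.map_neg_eq_inv, hψk,
      zpow_neg, zpow_natCast]

lemma cycDist_eq_natAbs_valMinAbs (x y : ZMod n) :
    cycDist n x y = (x - y).valMinAbs.natAbs :=
  (ZMod.valMinAbs_natAbs_eq_min _).symm

lemma cycDist_comm (x y : ZMod n) : cycDist n x y = cycDist n y x := by
  rw [cycDist_eq_natAbs_valMinAbs, ← ZMod.natAbs_valMinAbs_neg, neg_sub,
    cycDist_eq_natAbs_valMinAbs]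

lemma sub_eq_or_eq_neg_of_cycDist_eq {x y x' y' : ZMod n}
    (h : cycDist n x' y' = cycDist n x y) : x' - y' = x - y ∨ x' - y' = -(x - y) := by
  rwa [cycDist_eq_natAbs_valMinAbs, cycDist_eq_natAbs_valMinAbs,
    ZMod.natAbs_valMinAbs_eq_natAbs_valMinAbs] at h

lemma apply_eq_of_Pfun_ne_zero (hf : f ∈ fixSubmodule n) {h i j : ℕ}
    {t t' : ZMod n × ZMod n × ZMod n} (ht : Pfun n h i j t ≠ 0) (ht' : Pfun n h i j t' ≠ 0) :
    f t' = f t := by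
  obtain ⟨x, y, z⟩ := t
  obtain ⟨x', y', z'⟩ := t'
  simp only [Pfun, ne_eq, ite_eq_right_iff, one_ne_zero, imp_false, not_not] at ht ht'
  obtain ⟨h₁, h₂, h₃⟩ := ht
  obtain ⟨h₁', h₂', h₃'⟩ := ht'
  rw [cycDist_comm] at h₂ h₂'
  have normal : ∀ x y z, f (x, y, z) = f (0, y - x, z - x) := fun x y z => by
    simpa [sub_eq_add_neg] using (apply_add_of_mem_fixSubmodule hf (-x) x y z).symm
  rw [normal x', normal x]
  -- the differences `y - z`, `z - x`, `x - y` sum to zero and the profile fixes each up to sign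
  obtain ⟨-, hb, hc⟩ | ⟨-, hb, hc⟩ := eq_or_eq_neg_of_add_add_eq_zero
    (sub_eq_or_eq_neg_of_cycDist_eq (h₁'.trans h₁.symm))
    (sub_eq_or_eq_neg_of_cycDist_eq (h₂'.trans h₂.symm))
    (sub_eq_or_eq_neg_of_cycDist_eq (h₃'.trans h₃.symm)) (by abel) (by abel)
  · rw [show y' - x' = y - x by linear_combination -hc, hb]
  · rw [show y' - x' = -(y - x) by linear_combination -hc, hb]
    simpa only [neg_zero] using apply_neg_of_mem_fixSubmodule hf 0 (y - x) (z - x)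

lemma setOf_Pfun_mul_eq_span (h i j : ℕ) :
    {g | ∃ f ∈ fixSubmodule n, g = fun t => Pfun n h i j t * f t} =
      (↑(Submodule.span ℂ {Pfun n h i j}) : Set (ZMod n × ZMod n × ZMod n → ℂ)) := by
  ext g
  simp only [Set.mem_ofPred_eq, SetLike.mem_coe, Submodule.mem_span_singleton]
  constructor
  · rintro ⟨f, hf, rfl⟩
    obtain ⟨c, hc⟩ : ∃ c : ℂ, ∀ t, Pfun n h i j t ≠ 0 → f t = c := by
      by_cases hex : ∃ t₀, Pfun n h i j t₀ ≠ 0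
      · obtain ⟨t₀, ht₀⟩ := hex
        exact ⟨f t₀, fun t ht => apply_eq_of_Pfun_ne_zero hf ht₀ ht⟩
      · push Not at hex
        exact ⟨0, fun t ht => absurd (hex t) ht⟩
    refine ⟨c, funext fun t => ?_⟩
    by_cases ht : Pfun n h i j t = 0
    · simp [ht]
    · simp [hc t ht, mul_comm]
  · rintro ⟨c, rfl⟩
    exact ⟨fun _ => c, fun _ _ _ _ _ => rfl, funext fun t => mul_comm _ _⟩

lemma Qfun_eq_smul_Mop_comp_tripleDiag (D : ℕ) (ζ : ℂ) (h i j : ℕ) :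
    Qfun D n ζ h i j =
      (n : ℂ) • Mop1 n (Emat D n ζ h) (Mop2 n (Emat D n ζ i) (Mop3 n (Emat D n ζ j) tripleDiag)) :=
  funext fun ⟨u, v, w⟩ => by rw [Pi.smul_apply, Mop_comp_tripleDiag_apply]; rfl

lemma setOf_Mop_comp_Emat_eq_span {D : ℕ} (hn : n = 2 * D ∨ n = 2 * D + 1) {ζ : ℂ}
    (hζ : IsPrimitiveRoot ζ n) {h i j : ℕ} (hh : h ≤ D) (hi : i ≤ D) (hj : j ≤ D) :
    {g | ∃ f ∈ fixSubmodule n,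
        g = Mop1 n (Emat D n ζ h) (Mop2 n (Emat D n ζ i) (Mop3 n (Emat D n ζ j) f))} =
      (↑(Submodule.span ℂ {Qfun D n ζ h i j}) : Set (ZMod n × ZMod n × ZMod n → ℂ)) := by
  ext g
  simp only [Set.mem_ofPred_eq, SetLike.mem_coe, Submodule.mem_span_singleton,
    Qfun_eq_smul_Mop_comp_tripleDiag]
  constructor
  · rintro ⟨f, hf, rfl⟩
    have hfreqs : ∀ k, ∀ s ∈ cycFreqs D n k, ∀ s' ∈ cycFreqs D n k, s' = s ∨ s' = -s :=
      fun _ _ hs _ hs' => eq_or_eq_neg_of_mem_cycFreqs hs hs'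
    obtain ⟨κ, hκ⟩ := exists_Mop_comp_freqMat_eq_smul_tripleDiag
      (AddChar.zmodChar_primitive_of_primitive_root n hζ) (hfreqs h) (hfreqs i) (hfreqs j)
      (apply_add_of_mem_fixSubmodule hf) (apply_neg_of_mem_fixSubmodule hf)
    refine ⟨κ / n, ?_⟩
    rw [Emat_eq_freqMat hn hζ hh, Emat_eq_freqMat hn hζ hi, Emat_eq_freqMat hn hζ hj, hκ,
      smul_smul, div_mul_cancel₀ _ (NeZero.ne _)]
  · rintro ⟨c, rfl⟩
    exact ⟨(c * n) • tripleDiag, Submodule.smul_mem _ _ tripleDiag_mem_fixSubmodule,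
      by rw [Mop_comp_smul, smul_smul]⟩

end Cycle

lemma coe_span_singleton_eq_zero_iff {M : Type*} [AddCommGroup M] [Module ℂ M] (x : M) :
    (↑(Submodule.span ℂ {x}) : Set M) = {0} ↔ x = 0 := by
  rw [← Submodule.bot_coe (R := ℂ), SetLike.coe_set_eq, Submodule.span_singleton_eq_bot]

theorem stmt_19_general (D n : ℕ) (hn : n = 2 * D ∨ n = 2 * D + 1) [NeZero n]
    (ζ : ℂ) (hζ : ζ = Complex.exp (2 * Real.pi * Complex.I / n)) :
    ∀ h i j : ℕ, h ≤ D → i ≤ D → j ≤ D →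
      ({g | ∃ f ∈ fixSubmodule n, g = fun t => Pfun n h i j t * f t}
          = (↑(Submodule.span ℂ {Pfun n h i j}) : Set (ZMod n × ZMod n × ZMod n → ℂ)))
      ∧ ({g | ∃ f ∈ fixSubmodule n,
            g = Mop1 n (Emat D n ζ h) (Mop2 n (Emat D n ζ i) (Mop3 n (Emat D n ζ j) f))}
          = (↑(Submodule.span ℂ {Qfun D n ζ h i j}) : Set (ZMod n × ZMod n × ZMod n → ℂ)))
      ∧ (({g | ∃ f ∈ fixSubmodule n, g = fun t => Pfun n h i j t * f t} = ({0} : Set _))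
          ↔ ¬ ∃ t : ZMod n × ZMod n × ZMod n,
              cycDist n t.2.1 t.2.2 = h ∧ cycDist n t.1 t.2.2 = i ∧ cycDist n t.1 t.2.1 = j)
      ∧ (({g | ∃ f ∈ fixSubmodule n,
            g = Mop1 n (Emat D n ζ h) (Mop2 n (Emat D n ζ i) (Mop3 n (Emat D n ζ j) f))}
            = ({0} : Set _))
          ↔ Qfun D n ζ h i j = 0) := by
  have hprim : IsPrimitiveRoot ζ n := hζ ▸ Complex.isPrimitiveRoot_exp n (NeZero.ne n)
  intro h i j hh hi hj
  have hP := setOf_Pfun_mul_eq_span (n := n) h i j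
  have hQ := setOf_Mop_comp_Emat_eq_span hn hprim hh hi hj
  refine ⟨hP, hQ, ?_, ?_⟩
  · rw [hP, coe_span_singleton_eq_zero_iff, Pfun_eq_zero_iff]
  · rw [hQ, coe_span_singleton_eq_zero_iff]

/-- for all `h,i,j ∈ {0,…,D}`, the image of `Fix(Aut)` under pointwise
multiplication by `P_{h,i,j}` (i.e. `E_h^{*(1)}E_i^{*(2)}E_j^{*(3)}`) is the span of
`P_{h,i,j}`, and the image of `Fix(Aut)` under `E_h^{(1)}E_i^{(2)}E_j^{(3)}` is the
span of `Q_{h,i,j}`.  In particular, the former image is zero iff no triple has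
distance profile `(h,i,j)`, and the latter image is zero iff `Q_{h,i,j} = 0`. -/
theorem stmt_19 (D n : ℕ) (hD : 2 ≤ D) (hn : n = 2 * D ∨ n = 2 * D + 1) [NeZero n]
    (ζ : ℂ) (hζ : ζ = Complex.exp (2 * Real.pi * Complex.I / n)) :
    ∀ h i j : ℕ, h ≤ D → i ≤ D → j ≤ D →
      ({g | ∃ f ∈ fixSubmodule n, g = fun t => Pfun n h i j t * f t}
          = (↑(Submodule.span ℂ {Pfun n h i j}) : Set (ZMod n × ZMod n × ZMod n → ℂ)))
      ∧ ({g | ∃ f ∈ fixSubmodule n,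
            g = Mop1 n (Emat D n ζ h) (Mop2 n (Emat D n ζ i) (Mop3 n (Emat D n ζ j) f))}
          = (↑(Submodule.span ℂ {Qfun D n ζ h i j}) : Set (ZMod n × ZMod n × ZMod n → ℂ)))
      ∧ (({g | ∃ f ∈ fixSubmodule n, g = fun t => Pfun n h i j t * f t} = ({0} : Set _))
          ↔ ¬ ∃ t : ZMod n × ZMod n × ZMod n,
              cycDist n t.2.1 t.2.2 = h ∧ cycDist n t.1 t.2.2 = i ∧ cycDist n t.1 t.2.1 = j)
      ∧ (({g | ∃ f ∈ fixSubmodule n,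
            g = Mop1 n (Emat D n ζ h) (Mop2 n (Emat D n ζ i) (Mop3 n (Emat D n ζ j) f))}
            = ({0} : Set _))
          ↔ Qfun D n ζ h i j = 0) :=
  stmt_19_general D n hn ζ hζ
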